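/- Let R be a finite set, B a real R×R matrix, and l ∈ (0,∞)^R. For any r ∈ (0,∞)^R, ∫_{[0,2π]^R} exp(Σ_{x,y∈R} B_{x,y} √(l_x l_y) e^{i(θ_x−θ_y)}) ∏_x dθ_x/(2π) = ∫_{[0,2π]^R} exp(Σ_{x,y∈R} r_x B_{x,y} r_y^{−1} √(l_x l_y) e^{i(θ_x−θ_y)}) ∏_x dθ_x/(2π). -/

import Mathlib

/-!
Write `Φ(w) = exp (∑ c_{xy} e^{i (w_x - w_y)})` for `w ∈ ℂ^ι`; the conjugated integrand is
`Φ(θ - i log r)`. For a real vector `s`, the function `z ↦ ∫_{[0,2π]^ι} Φ(θ + z s) dθ` is entire,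
and for real `z` it is constant: on `ℝ^ι` the function `Φ` is `2π`-periodic in each coordinate,
so the real shift `z s` is absorbed by translation invariance of Haar measure on the torus.
By the identity theorem it is constant on `ℂ`; take `z = -i` and `s = log r`.
-/

open MeasureTheory Complex Finset

theorem differentiable_setIntegral_comp_add_smul {X E : Type*} [TopologicalSpace X] [T2Space X]
    [MeasurableSpace X] [OpensMeasurableSpace X] {μ : Measure X} [IsFiniteMeasureOnCompacts μ]
    [NormedAddCommGroup E] [NormedSpace ℂ E] {K : Set X} (hK : IsCompact K)
    {Φ : E → ℂ} (hΦ : ContDiff ℂ 1 Φ) {g : X → E} (hg : Continuous g)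
    (v : E) : Differentiable ℂ fun z : ℂ => ∫ x in K, Φ (g x + z • v) ∂μ := by
  intro z₀
  have hF : Continuous fun p : ℂ × X => Φ (g p.2 + p.1 • v) := by
    have := hΦ.continuous; fun_prop
  have hF' : Continuous fun p : ℂ × X => fderiv ℂ Φ (g p.2 + p.1 • v) v := by
    have := hΦ.continuous_fderiv one_ne_zero; fun_prop
  have hderiv : ∀ z x,
      HasDerivAt (fun w : ℂ => Φ (g x + w • v)) (fderiv ℂ Φ (g x + z • v) v) z :=
    fun z x => ((hΦ.differentiable one_ne_zero _).hasFDerivAt.comp_hasDerivAt z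
      (((hasDerivAt_id z).smul_const v).const_add (g x))).congr_deriv (by simp)
  have : IsFiniteMeasure (μ.restrict K) := isFiniteMeasure_restrict.2 hK.measure_lt_top.ne
  obtain ⟨C, hC⟩ := ((ProperSpace.isCompact_closedBall z₀ 1).prod hK).exists_bound_of_continuousOn
    hF'.continuousOn
  have hsection : ∀ {G : ℂ × X → ℂ}, Continuous G → ∀ z,
      AEStronglyMeasurable (fun x => G (z, x)) (μ.restrict K) :=
    fun hG z => (hG.comp (Continuous.prodMk_right z)).aestronglyMeasurable
  exact (hasDerivAt_integral_of_dominated_loc_of_deriv_le (bound := fun _ => C)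
    (Metric.ball_mem_nhds z₀ one_pos) (Filter.Eventually.of_forall (hsection hF))
    ((hF.comp (Continuous.prodMk_right z₀)).continuousOn.integrableOn_compact hK)
    (hsection hF' z₀)
    ((ae_restrict_iff' hK.measurableSet).2 (Filter.Eventually.of_forall fun x hx z hz =>
      hC (z, x) ⟨Metric.ball_subset_closedBall hz, hx⟩))
    (integrable_const C) (Filter.Eventually.of_forall fun x z _ => hderiv z x)).2.differentiableAt

theorem eq_apply_zero_of_differentiable_of_forall_ofReal {f : ℂ → ℂ} (hf : Differentiable ℂ f)
    (hreal : ∀ t : ℝ, f t = f 0) (z : ℂ) : f z = f 0 := by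
  have hfreq : ∃ᶠ w in nhdsWithin (0 : ℂ) {0}ᶜ, f w = f 0 := by
    have : Filter.Tendsto ((↑) : ℝ → ℂ) (nhdsWithin 0 {0}ᶜ) (nhdsWithin 0 {0}ᶜ) :=
      tendsto_nhdsWithin_of_tendsto_nhds_of_eventually_within _
        (continuous_ofReal.tendsto' 0 0 ofReal_zero |>.mono_left nhdsWithin_le_nhds)
        (eventually_nhdsWithin_of_forall fun t ht => by simpa using ht)
    exact this.frequently (Filter.Frequently.of_forall hreal)
  exact (hf.differentiableOn.analyticOnNhd isOpen_univ).eqOn_of_preconnected_of_frequently_eq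
    analyticOnNhd_const isPreconnected_univ (Set.mem_univ 0) hfreq (Set.mem_univ z)

section

variable {ι : Type*} [Fintype ι]

section Torus

variable {T : ℝ} [Fact (0 < T)] {E : Type*} [NormedAddCommGroup E] [NormedSpace ℝ E]

theorem measurePreserving_pi_coe_addCircle :
    MeasurePreserving (fun (θ : ι → ℝ) x => (θ x : AddCircle T))
      (volume.restrict (Set.univ.pi fun _ => Set.Ioc 0 T)) volume := by
  have hrestrict : (volume : Measure (ι → ℝ)).restrict (Set.univ.pi fun _ => Set.Ioc 0 T)
      = Measure.pi fun _ => volume.restrict (Set.Ioc 0 T) := by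
    rw [volume_pi, Measure.restrict_pi_pi]
  rw [hrestrict, volume_pi]
  exact measurePreserving_pi _ _ fun _ => by simpa using AddCircle.measurePreserving_mk T 0

theorem setIntegral_pi_Icc_comp_coe {F : (ι → AddCircle T) → E}
    (hF : AEStronglyMeasurable F volume) :
    ∫ θ in Set.univ.pi (fun _ : ι => Set.Icc 0 T), F (fun x => (θ x : AddCircle T))
      = ∫ u, F u := by
  have hbox : (Set.univ.pi fun _ : ι => Set.Ioc 0 T)
      =ᵐ[volume] Set.univ.pi fun _ => Set.Icc 0 T := by
    rw [volume_pi]; exact Measure.pi_Ioc_ae_eq_pi_Icc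
  rw [← setIntegral_congr_set hbox,
    ← measurePreserving_pi_coe_addCircle.map_eq, integral_map]
  · exact measurePreserving_pi_coe_addCircle.aemeasurable
  · rwa [measurePreserving_pi_coe_addCircle.map_eq]

theorem setIntegral_pi_Icc_comp_coe_add {F : (ι → AddCircle T) → E} (hF : Continuous F)
    (v : ι → ℝ) :
    ∫ θ in Set.univ.pi (fun _ : ι => Set.Icc 0 T), F (fun x => ((θ x + v x : ℝ) : AddCircle T))
      = ∫ θ in Set.univ.pi (fun _ : ι => Set.Icc 0 T), F (fun x => (θ x : AddCircle T)) := by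
  have hshift : Continuous fun u : ι → AddCircle T => F (u + fun x => (v x : AddCircle T)) :=
    hF.comp (continuous_add_const _)
  simp only [AddCircle.coe_add]
  rw [setIntegral_pi_Icc_comp_coe hF.aestronglyMeasurable, ← integral_add_right_eq_self _
    (fun x => (v x : AddCircle T))]
  exact setIntegral_pi_Icc_comp_coe hshift.aestronglyMeasurable
end Torus

theorem setIntegral_comp_ofReal_add_smul {K : Set (ι → ℝ)} (hK : IsCompact K)
    {Φ : (ι → ℂ) → ℂ} (hΦ : ContDiff ℂ 1 Φ)
    (hper : ∀ v : ι → ℝ, ∫ θ in K, Φ (fun x => ((θ x + v x : ℝ) : ℂ))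
      = ∫ θ in K, Φ (fun x => (θ x : ℂ)))
    (s : ι → ℝ) (z : ℂ) :
    ∫ θ in K, Φ ((fun x => (θ x : ℂ)) + z • fun x => (s x : ℂ))
      = ∫ θ in K, Φ (fun x => (θ x : ℂ)) := by
  have hreal : ∀ t : ℝ, ∫ θ in K, Φ ((fun x => (θ x : ℂ)) + (t : ℂ) • fun x => (s x : ℂ))
      = ∫ θ in K, Φ ((fun x => (θ x : ℂ)) + (0 : ℂ) • fun x => (s x : ℂ)) := by
    intro t
    have hshift : ∀ θ : ι → ℝ, ((fun x => (θ x : ℂ)) + (t : ℂ) • fun x => (s x : ℂ))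
        = fun x => ((θ x + (t • s) x : ℝ) : ℂ) := fun θ => by ext x; simp
    simp only [hshift, zero_smul, add_zero]
    exact hper (t • s)
  simpa using eq_apply_zero_of_differentiable_of_forall_ofReal
    (differentiable_setIntegral_comp_add_smul hK hΦ (by fun_prop) _) hreal z

noncomputable def torusExp (c : ι → ι → ℂ) (w : ι → ℂ) : ℂ :=
  exp (∑ x, ∑ y, c x y * exp (I * (w x - w y)))

theorem contDiff_torusExp (c : ι → ι → ℂ) : ContDiff ℂ 1 (torusExp c) := by
  unfold torusExp; fun_prop

theorem setIntegral_torusExp_ofReal_add (c : ι → ι → ℂ) (v : ι → ℝ) :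
    ∫ θ in Set.univ.pi (fun _ : ι => Set.Icc 0 (2 * Real.pi)),
        torusExp c (fun x => ((θ x + v x : ℝ) : ℂ))
      = ∫ θ in Set.univ.pi (fun _ : ι => Set.Icc 0 (2 * Real.pi)),
        torusExp c (fun x => (θ x : ℂ)) := by
  have : Fact (0 < 2 * Real.pi) := ⟨Real.two_pi_pos⟩
  set F : (ι → AddCircle (2 * Real.pi)) → ℂ := fun u =>
    exp (∑ x, ∑ y, c x y * (AddCircle.toCircle (u x - u y) : ℂ))
  have hfactor : ∀ θ : ι → ℝ,
      torusExp c (fun x => (θ x : ℂ)) = F fun x => (θ x : AddCircle (2 * Real.pi)) := by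
    intro θ
    simp only [torusExp, F, ← AddCircle.coe_sub, AddCircle.toCircle_apply_mk, Circle.coe_exp]
    congr! 5
    field_simp
    push_cast
    ring
  have hF : Continuous F := by fun_prop
  simp only [hfactor]
  exact setIntegral_pi_Icc_comp_coe_add hF v

theorem torusExp_add_neg_I_smul_log (c : ι → ι → ℂ) {r : ι → ℝ} (hr : ∀ x, 0 < r x)
    (w : ι → ℂ) :
    torusExp c (w + (-I) • fun x => (Real.log (r x) : ℂ))
      = torusExp (fun x y => (r x : ℂ) * c x y * (r y : ℂ)⁻¹) w := by
  simp only [torusExp]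
  congr 1
  refine sum_congr rfl fun x _ => sum_congr rfl fun y _ => ?_
  have hphase : I * ((w + (-I) • fun x => (Real.log (r x) : ℂ)) x
      - (w + (-I) • fun x => (Real.log (r x) : ℂ)) y)
      = I * (w x - w y) + ((Real.log (r x) : ℂ) - Real.log (r y)) := by
    simp only [Pi.add_apply, Pi.smul_apply, smul_eq_mul]
    linear_combination (-((Real.log (r x) : ℂ) - Real.log (r y))) * I_sq
  rw [hphase, exp_add, exp_sub, ← ofReal_exp, ← ofReal_exp, Real.exp_log (hr x),
    Real.exp_log (hr y)]
  ring

theorem setIntegral_torusExp_conj (c : ι → ι → ℂ) {r : ι → ℝ} (hr : ∀ x, 0 < r x) :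
    ∫ θ in Set.univ.pi (fun _ : ι => Set.Icc 0 (2 * Real.pi)),
        torusExp (fun x y => (r x : ℂ) * c x y * (r y : ℂ)⁻¹) (fun x => (θ x : ℂ))
      = ∫ θ in Set.univ.pi (fun _ : ι => Set.Icc 0 (2 * Real.pi)),
        torusExp c (fun x => (θ x : ℂ)) := by
  simp only [← torusExp_add_neg_I_smul_log c hr]
  exact setIntegral_comp_ofReal_add_smul (isCompact_univ_pi fun _ => isCompact_Icc)
    (contDiff_torusExp c) (setIntegral_torusExp_ofReal_add c) _ _

end

theorem stmt14_general {ι : Type*} [Fintype ι] (B : Matrix ι ι ℝ)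
    (l : ι → ℝ) (r : ι → ℝ) (hr : ∀ x, 0 < r x) :
    (∫ θ : ι → ℝ in Set.univ.pi fun _ : ι => Set.Icc 0 (2 * Real.pi),
        Complex.exp (∑ x, ∑ y, ((B x y * Real.sqrt (l x * l y) : ℝ) : ℂ) *
          Complex.exp (Complex.I * ((θ x : ℂ) - (θ y : ℂ)))))
      = ∫ θ : ι → ℝ in Set.univ.pi fun _ : ι => Set.Icc 0 (2 * Real.pi),
          Complex.exp (∑ x, ∑ y,
            ((r x * B x y * (r y)⁻¹ * Real.sqrt (l x * l y) : ℝ) : ℂ) *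
              Complex.exp (Complex.I * ((θ x : ℂ) - (θ y : ℂ)))) := by
  have h := setIntegral_torusExp_conj (fun x y => ((B x y * Real.sqrt (l x * l y) : ℝ) : ℂ)) hr
  simp only [torusExp] at h
  convert h.symm using 7
  push_cast
  ring

/-- contour-deformation identity for the torus integral: for any
`r ∈ (0,∞)^R`, the normalized torus integral of
`exp(∑_{x,y} B_{x,y}√(l_x l_y)e^{i(θ_x−θ_y)})` is unchanged when `B_{x,y}` is replaced
by `r_x B_{x,y} r_y⁻¹`. -/
theorem stmt14 {ι : Type*} [Fintype ι] [DecidableEq ι] (B : Matrix ι ι ℝ)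
    (l : ι → ℝ) (hl : ∀ x, 0 < l x) (r : ι → ℝ) (hr : ∀ x, 0 < r x) :
    (∫ θ : ι → ℝ in Set.univ.pi fun _ : ι => Set.Icc 0 (2 * Real.pi),
        Complex.exp (∑ x, ∑ y, ((B x y * Real.sqrt (l x * l y) : ℝ) : ℂ) *
          Complex.exp (Complex.I * ((θ x : ℂ) - (θ y : ℂ)))))
      = ∫ θ : ι → ℝ in Set.univ.pi fun _ : ι => Set.Icc 0 (2 * Real.pi),
          Complex.exp (∑ x, ∑ y,
            ((r x * B x y * (r y)⁻¹ * Real.sqrt (l x * l y) : ℝ) : ℂ) *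
              Complex.exp (Complex.I * ((θ x : ℂ) - (θ y : ℂ)))) :=
  stmt14_general B l r hr
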